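/- arXiv:2212.00060 — 2 statements merged into one kernel-verified Lean document; each statement's English description precedes it below -/
import Mathlib

section
/- Over the alphabet A = {0,1,2} the code C = {0000, 0111, 1012, 1120, 2021} ⊆ A^4 of size 5 is 1-error correctable for the network N_2, and no code C' ⊆ A^4 of size 6 over a 3-element alphabet is 1-error correctable for N_2; hence σ(N_2, 3) = 5. -/
open Finset

/-- The "fan" of a codeword `c` under the network code `(F1, F2)` for the network `N_s`:
the set of possible outputs at the terminal when the adversary changes at most one
of the `s+2` symbols sent by the source. -/
def fan {A : Type*} [Fintype A] [DecidableEq A] (s : ℕ)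
    (F1 : A → A) (F2 : (Fin (s + 1) → A) → Fin s → A)
    (c : Fin (s + 2) → A) : Finset (A × (Fin s → A)) :=
  (Finset.univ.filter fun x : Fin (s + 2) → A => hammingDist x c ≤ 1).image
    fun x => (F1 (x 0), F2 fun i => x i.succ)

/-- A code `C ⊆ A^{s+2}` is 1-error correctable for the network `N_s` if there are
functions `F1 : A → A` and `F2 : A^{s+1} → A^s` such that the fans of distinct
codewords are disjoint. -/
def OneErrCorr {A : Type*} [Fintype A] [DecidableEq A] (s : ℕ)
    (C : Finset (Fin (s + 2) → A)) : Prop :=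
  ∃ (F1 : A → A) (F2 : (Fin (s + 1) → A) → Fin s → A),
    ∀ c ∈ C, ∀ c' ∈ C, c ≠ c' → Disjoint (fan s F1 F2 c) (fan s F1 F2 c')

/-- `tau s C c2` is the set of codewords of `C` whose last `s+1` coordinates are at
Hamming distance at most 1 from `c2`. -/
def tau {A : Type*} [Fintype A] [DecidableEq A] (s : ℕ)
    (C : Finset (Fin (s + 2) → A)) (c2 : Fin (s + 1) → A) :
    Finset (Fin (s + 2) → A) :=
  C.filter fun c => hammingDist c2 (fun i => c i.succ) ≤ 1

/-- The code of Example 1/2 over the ternary alphabet. -/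
def exampleCode13 : Finset (Fin 4 → Fin 3) :=
  {![0,0,0,0], ![0,1,1,1], ![1,0,1,2], ![1,1,2,0], ![2,0,2,1]}


/-!
Write `t c` for the last three symbols of a codeword `c` and `D c` (`spareOutputs`) for the
values of `F2` on the radius-one ball around `t c` that are not of the form `F2 (t c')`. Disjoint
fans force the six values `F2 (t c)` to be distinct, so all `D c` lie in one 3-element subset
of `A²`. They also force distinct tails to be at distance at least 2, tails of codewords with
equal `F1`-values to differ in every place and to have disjoint `D`, and `D c ∩ D c' ≠ ∅`
whenever the tails are at distance at most 2 (a midpoint of the two tails is sent into both).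

Over a 3-letter alphabet, if `x, y, z` pairwise differ in every place, a word differing
everywhere from `x` agrees in each place with `y` or `z`, so it is within distance 1 of one of
them; likewise `a, b, c, d` with `a, d` both differing everywhere from `b` and from `c` must have
`b, c` or `a, d` within distance 1. Hence if an `F1`-class held three codewords, every other
codeword `d` would have `|D d| ≥ 3`, which two of them with equal `F1`-values cannot both have.
So the three `F1`-classes are pairs, each with a light member `x`, i.e. `|D x| ≤ 1`. A light
codeword differs everywhere from some member of each other class, and by the square rule from
its light member. The three light codewords then form a triangle, which the partner of any of
them contradicts.
-/

theorem Finset.one_lt_card_of_not_disjoint {α : Type*} {s t₁ t₂ : Finset α}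
    (h₁ : ¬Disjoint s t₁) (h₂ : ¬Disjoint s t₂) (h₁₂ : Disjoint t₁ t₂) : 1 < #s := by
  obtain ⟨a, ha, ha₁⟩ := not_disjoint_iff.1 h₁
  obtain ⟨b, hb, hb₂⟩ := not_disjoint_iff.1 h₂
  exact one_lt_card.2 ⟨a, ha, b, hb, fun h => disjoint_left.1 h₁₂ ha₁ (h ▸ hb₂)⟩

theorem Finset.two_lt_card_of_not_disjoint {α : Type*} {s t₁ t₂ t₃ : Finset α}
    (h₁ : ¬Disjoint s t₁) (h₂ : ¬Disjoint s t₂) (h₃ : ¬Disjoint s t₃)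
    (h₁₂ : Disjoint t₁ t₂) (h₁₃ : Disjoint t₁ t₃) (h₂₃ : Disjoint t₂ t₃) : 2 < #s := by
  obtain ⟨a, ha, ha₁⟩ := not_disjoint_iff.1 h₁
  obtain ⟨b, hb, hb₂⟩ := not_disjoint_iff.1 h₂
  obtain ⟨c, hc, hc₃⟩ := not_disjoint_iff.1 h₃
  exact two_lt_card.2 ⟨a, ha, b, hb, c, hc, fun h => disjoint_left.1 h₁₂ ha₁ (h ▸ hb₂),
    fun h => disjoint_left.1 h₁₃ ha₁ (h ▸ hc₃), fun h => disjoint_left.1 h₂₃ hb₂ (h ▸ hc₃)⟩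

section Hamming

variable {ι β : Type*} [Fintype ι] [DecidableEq β]

theorem hammingDist_eq_card_iff {u v : ι → β} :
    hammingDist u v = Fintype.card ι ↔ ∀ i, u i ≠ v i := by
  rw [hammingDist, ← card_univ, card_filter_eq_iff]
  simp

theorem hammingDist_add_hammingDist_le_card {u v u' v' : ι → β}
    (h : ∀ i, u i = v i ∨ u' i = v' i) :
    hammingDist u v + hammingDist u' v' ≤ Fintype.card ι := by
  classical
  rw [hammingDist, hammingDist, ← card_union_of_disjoint]
  · exact card_le_univ _
  · rw [disjoint_filter]
    intro i _ hi hi'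
    exact (h i).elim hi hi'

theorem exists_hammingDist_le_one_and_le_one [DecidableEq ι] {u v : ι → β}
    (h : hammingDist u v ≤ 2) : ∃ y, hammingDist y u ≤ 1 ∧ hammingDist y v ≤ 1 := by
  by_cases huv : hammingDist u v ≤ 1
  · exact ⟨v, by rwa [hammingDist_comm], by simp⟩
  obtain ⟨i, hi⟩ := Function.ne_iff.1 (hammingDist_ne_zero.1 (by omega : hammingDist u v ≠ 0))
  refine ⟨Function.update u i (v i), ?_, ?_⟩
  · calc hammingDist (Function.update u i (v i)) u ≤ #{i} := by
          refine card_le_card fun j hj => ?_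
          by_contra hji
          simp_all [Function.update_of_ne]
      _ = 1 := card_singleton i
  · have : hammingDist (Function.update u i (v i)) v < hammingDist u v := by
      refine card_lt_card ⟨?_, ?_⟩
      · intro j
        by_cases hji : j = i <;> simp_all [Function.update_of_ne]
      · intro hsub
        simpa using hsub (mem_filter.2 ⟨mem_univ i, hi⟩)
    omega

theorem hammingDist_cons {n : ℕ} (a : β) (x : Fin n → β) (c : Fin (n + 1) → β) :
    hammingDist (Fin.cons a x : Fin (n + 1) → β) c =
      (if a = c 0 then 0 else 1) + hammingDist x (Fin.tail c) := by
  rw [hammingDist, hammingDist, card_filter, card_filter, Fin.sum_univ_succ]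
  simp only [Fin.cons_zero, Fin.cons_succ, Fin.tail, ne_eq, ite_not]
  congr 1
  exact sum_congr rfl fun i _ => by split_ifs <;> simp_all

theorem hammingDist_le_three (u v : Fin 3 → β) : hammingDist u v ≤ 3 :=
  hammingDist_le_card_fintype.trans_eq (Fintype.card_fin 3)

end Hamming

theorem eq_or_eq_or_eq_of_card_eq_three {A : Type*} [Fintype A] (hA : Fintype.card A = 3)
    {a b c : A} (hab : a ≠ b) (hac : a ≠ c) (hbc : b ≠ c) (x : A) : x = a ∨ x = b ∨ x = c := by
  classical
  have h : ({a, b, c} : Finset A) = univ :=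
    eq_univ_of_card _ (hA ▸ card_eq_three.2 ⟨a, b, c, hab, hac, hbc, rfl⟩)
  have hx : x ∈ ({a, b, c} : Finset A) := h ▸ mem_univ x
  simpa using hx

section TernaryAlphabet

variable {ι A : Type*} [Fintype ι] [Fintype A] [DecidableEq A] {w x y z : ι → A}

theorem hammingDist_add_hammingDist_le_card_of_triangle (hA : Fintype.card A = 3)
    (hxy : hammingDist x y = Fintype.card ι) (hxz : hammingDist x z = Fintype.card ι)
    (hyz : hammingDist y z = Fintype.card ι) (hwx : hammingDist w x = Fintype.card ι) :
    hammingDist w y + hammingDist w z ≤ Fintype.card ι := by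
  rw [hammingDist_eq_card_iff] at hxy hxz hyz hwx
  refine hammingDist_add_hammingDist_le_card fun i => ?_
  rcases eq_or_eq_or_eq_of_card_eq_three hA (hxy i) (hxz i) (hyz i) (w i) with h | h | h
  · exact absurd h (hwx i)
  · exact .inl h
  · exact .inr h

theorem hammingDist_add_hammingDist_le_card_of_square (hA : Fintype.card A = 3)
    (hxy : hammingDist x y = Fintype.card ι) (hxz : hammingDist x z = Fintype.card ι)
    (hwy : hammingDist w y = Fintype.card ι) (hwz : hammingDist w z = Fintype.card ι) :
    hammingDist y z + hammingDist x w ≤ Fintype.card ι := by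
  rw [hammingDist_eq_card_iff] at hxy hxz hwy hwz
  refine hammingDist_add_hammingDist_le_card fun i => or_iff_not_imp_left.2 fun hyz => ?_
  rcases eq_or_eq_or_eq_of_card_eq_three hA (hxy i) (hxz i) hyz (w i) with h | h | h
  · exact h.symm
  · exact absurd h (hwy i)
  · exact absurd h (hwz i)

end TernaryAlphabet

section Fan

variable {A : Type*} [Fintype A] [DecidableEq A] {s : ℕ} {F1 : A → A}
  {F2 : (Fin (s + 1) → A) → Fin s → A} {C : Finset (Fin (s + 2) → A)}
  {c c' : Fin (s + 2) → A} {y y' : Fin (s + 1) → A}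

theorem mem_fan_of_hammingDist_le_one {x : Fin (s + 2) → A} (hx : hammingDist x c ≤ 1) :
    (F1 (x 0), F2 (Fin.tail x)) ∈ fan s F1 F2 c :=
  mem_image_of_mem _ (mem_filter.2 ⟨mem_univ x, hx⟩)

theorem mk_tail_mem_fan (a : A) : (F1 a, F2 (Fin.tail c)) ∈ fan s F1 F2 c := by
  have h := mem_fan_of_hammingDist_le_one (F1 := F1) (F2 := F2) (c := c)
    (x := Fin.cons a (Fin.tail c)) (by
      rw [hammingDist_cons, hammingDist_self]
      split_ifs <;> simp)
  simpa using h

theorem mk_head_mem_fan (hy : hammingDist y (Fin.tail c) ≤ 1) :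
    (F1 (c 0), F2 y) ∈ fan s F1 F2 c := by
  have h := mem_fan_of_hammingDist_le_one (F1 := F1) (F2 := F2) (c := c)
    (x := Fin.cons (c 0) y) (by rwa [hammingDist_cons, if_pos rfl, zero_add])
  simpa using h

theorem F2_tail_ne_of_hammingDist_le_one
    (hF : (C : Set (Fin (s + 2) → A)).PairwiseDisjoint (fan s F1 F2))
    (hc : c ∈ C) (hc' : c' ∈ C) (hne : c ≠ c') (hy : hammingDist y (Fin.tail c') ≤ 1) :
    F2 (Fin.tail c) ≠ F2 y := fun h =>
  disjoint_left.1 (hF hc hc' hne) (mk_tail_mem_fan (c' 0)) (h ▸ mk_head_mem_fan hy)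

theorem F2_ne_of_F1_eq
    (hF : (C : Set (Fin (s + 2) → A)).PairwiseDisjoint (fan s F1 F2))
    (hc : c ∈ C) (hc' : c' ∈ C) (hne : c ≠ c') (hcol : F1 (c 0) = F1 (c' 0))
    (hy : hammingDist y (Fin.tail c) ≤ 1) (hy' : hammingDist y' (Fin.tail c') ≤ 1) :
    F2 y ≠ F2 y' := fun h =>
  disjoint_left.1 (hF hc hc' hne) (mk_head_mem_fan hy) (hcol ▸ h ▸ mk_head_mem_fan hy')

theorem two_le_hammingDist_tail
    (hF : (C : Set (Fin (s + 2) → A)).PairwiseDisjoint (fan s F1 F2))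
    (hc : c ∈ C) (hc' : c' ∈ C) (hne : c ≠ c') :
    2 ≤ hammingDist (Fin.tail c) (Fin.tail c') := by
  by_contra h
  exact F2_tail_ne_of_hammingDist_le_one hF hc' hc hne.symm (y := Fin.tail c')
    (by rw [hammingDist_comm]; omega) rfl

theorem three_le_hammingDist_tail_of_F1_eq
    (hF : (C : Set (Fin (s + 2) → A)).PairwiseDisjoint (fan s F1 F2))
    (hc : c ∈ C) (hc' : c' ∈ C) (hne : c ≠ c') (hcol : F1 (c 0) = F1 (c' 0)) :
    3 ≤ hammingDist (Fin.tail c) (Fin.tail c') := by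
  by_contra h
  obtain ⟨y, hy, hy'⟩ := exists_hammingDist_le_one_and_le_one (u := Fin.tail c)
    (v := Fin.tail c') (by omega)
  exact F2_ne_of_F1_eq hF hc hc' hne hcol hy hy' rfl

variable (F2 C) in
def unusedOutputs : Finset (Fin s → A) :=
  (C.image fun c => F2 (Fin.tail c))ᶜ

variable (F2 C) in
def spareOutputs (c : Fin (s + 2) → A) : Finset (Fin s → A) :=
  ({y | hammingDist y (Fin.tail c) ≤ 1} : Finset _).image F2 ∩ unusedOutputs F2 C

theorem card_unusedOutputs
    (hF : (C : Set (Fin (s + 2) → A)).PairwiseDisjoint (fan s F1 F2)) :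
    #(unusedOutputs F2 C) = Fintype.card A ^ s - #C := by
  rw [unusedOutputs, card_compl, card_image_of_injOn, Fintype.card_fun, Fintype.card_fin]
  intro c hc c' hc' h
  by_contra hne
  exact F2_tail_ne_of_hammingDist_le_one hF hc hc' hne (by simp) h

theorem disjoint_spareOutputs_of_F1_eq
    (hF : (C : Set (Fin (s + 2) → A)).PairwiseDisjoint (fan s F1 F2))
    (hc : c ∈ C) (hc' : c' ∈ C) (hne : c ≠ c') (hcol : F1 (c 0) = F1 (c' 0)) :
    Disjoint (spareOutputs F2 C c) (spareOutputs F2 C c') := by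
  simp only [spareOutputs, disjoint_left, mem_inter, mem_image, mem_filter, mem_univ, true_and]
  rintro _ ⟨⟨y, hy, rfl⟩, -⟩ ⟨⟨y', hy', h⟩, -⟩
  exact F2_ne_of_F1_eq hF hc hc' hne hcol hy hy' h.symm

theorem not_disjoint_spareOutputs
    (hF : (C : Set (Fin (s + 2) → A)).PairwiseDisjoint (fan s F1 F2))
    (hc : c ∈ C) (hc' : c' ∈ C) (hne : c ≠ c')
    (h : hammingDist (Fin.tail c) (Fin.tail c') ≤ 2) :
    ¬Disjoint (spareOutputs F2 C c) (spareOutputs F2 C c') := by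
  obtain ⟨y, hy, hy'⟩ := exists_hammingDist_le_one_and_le_one h
  have hunused : F2 y ∈ unusedOutputs F2 C := by
    simp only [unusedOutputs, mem_compl, mem_image, not_exists, not_and]
    intro k hk hky
    by_cases hkc : k = c
    · exact F2_tail_ne_of_hammingDist_le_one hF (hkc ▸ hc) hc' (hkc ▸ hne) hy' hky
    · exact F2_tail_ne_of_hammingDist_le_one hF hk hc hkc hy hky
  refine not_disjoint_iff.2 ⟨F2 y, ?_, ?_⟩ <;>
    exact mem_inter.2 ⟨mem_image_of_mem _ (by simpa), hunused⟩

end Fan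

section TernaryNetwork

variable {A : Type*} [Fintype A] [DecidableEq A] {F1 : A → A}
  {F2 : (Fin 3 → A) → Fin 2 → A} {C : Finset (Fin 4 → A)} {a b c d x x' y y' : Fin 4 → A}

theorem hammingDist_tail_eq_three_of_F1_eq
    (hF : (C : Set (Fin 4 → A)).PairwiseDisjoint (fan 2 F1 F2))
    (hc : c ∈ C) (hx : x ∈ C) (hne : c ≠ x) (hcol : F1 (c 0) = F1 (x 0)) :
    hammingDist (Fin.tail c) (Fin.tail x) = 3 :=
  le_antisymm (hammingDist_le_three _ _) (three_le_hammingDist_tail_of_F1_eq hF hc hx hne hcol)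

theorem not_disjoint_spareOutputs_of_ne_three
    (hF : (C : Set (Fin 4 → A)).PairwiseDisjoint (fan 2 F1 F2))
    (hc : c ∈ C) (hx : x ∈ C) (hne : c ≠ x)
    (h : hammingDist (Fin.tail c) (Fin.tail x) ≠ 3) :
    ¬Disjoint (spareOutputs F2 C c) (spareOutputs F2 C x) :=
  not_disjoint_spareOutputs hF hc hx hne <| by
    have := hammingDist_le_three (Fin.tail c) (Fin.tail x)
    omega

theorem card_spareOutputs_add_card_le (hA : Fintype.card A = 3)
    (hF : (C : Set (Fin 4 → A)).PairwiseDisjoint (fan 2 F1 F2)) (hC : #C = 6)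
    (hc : c ∈ C) (hx : x ∈ C) (hne : c ≠ x) (hcol : F1 (c 0) = F1 (x 0)) :
    #(spareOutputs F2 C c) + #(spareOutputs F2 C x) ≤ 3 := by
  rw [← card_union_of_disjoint (disjoint_spareOutputs_of_F1_eq hF hc hx hne hcol)]
  calc _ ≤ #(unusedOutputs F2 C) :=
        card_le_card (union_subset inter_subset_right inter_subset_right)
    _ = 3 := by rw [card_unusedOutputs hF, hA, hC]; rfl

theorem hammingDist_tail_ne_three_of_triangle (hA : Fintype.card A = 3)
    (hF : (C : Set (Fin 4 → A)).PairwiseDisjoint (fan 2 F1 F2))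
    (hy : y ∈ C) (hc : c ∈ C) (hd : d ∈ C) (hdy : d ≠ y) (hdc : d ≠ c)
    (hxy : hammingDist (Fin.tail x) (Fin.tail y) = 3)
    (hxc : hammingDist (Fin.tail x) (Fin.tail c) = 3)
    (hyc : hammingDist (Fin.tail y) (Fin.tail c) = 3) :
    hammingDist (Fin.tail d) (Fin.tail x) ≠ 3 := fun hdx => by
  have := hammingDist_add_hammingDist_le_card_of_triangle hA
    (hxy.trans (Fintype.card_fin 3).symm) (hxc.trans (Fintype.card_fin 3).symm)
    (hyc.trans (Fintype.card_fin 3).symm) (hdx.trans (Fintype.card_fin 3).symm)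
  have := two_le_hammingDist_tail hF hd hy hdy
  have := two_le_hammingDist_tail hF hd hc hdc
  simp only [Fintype.card_fin] at *
  omega

theorem hammingDist_tail_ne_three_of_square (hA : Fintype.card A = 3)
    (hF : (C : Set (Fin 4 → A)).PairwiseDisjoint (fan 2 F1 F2))
    (ha : a ∈ C) (hb : b ∈ C) (hc : c ∈ C) (hd : d ∈ C) (hbc : b ≠ c) (had : a ≠ d)
    (hab : hammingDist (Fin.tail a) (Fin.tail b) = 3)
    (hac : hammingDist (Fin.tail a) (Fin.tail c) = 3)
    (hdb : hammingDist (Fin.tail d) (Fin.tail b) = 3) :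
    hammingDist (Fin.tail d) (Fin.tail c) ≠ 3 := fun hdc => by
  have := hammingDist_add_hammingDist_le_card_of_square hA
    (hab.trans (Fintype.card_fin 3).symm) (hac.trans (Fintype.card_fin 3).symm)
    (hdb.trans (Fintype.card_fin 3).symm) (hdc.trans (Fintype.card_fin 3).symm)
  have := two_le_hammingDist_tail hF hb hc hbc
  have := two_le_hammingDist_tail hF ha hd had
  simp only [Fintype.card_fin] at *
  omega

theorem not_disjoint_spareOutputs_of_triangle (hA : Fintype.card A = 3)
    (hF : (C : Set (Fin 4 → A)).PairwiseDisjoint (fan 2 F1 F2))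
    (hx : x ∈ C) (hy : y ∈ C) (hc : c ∈ C) (hd : d ∈ C)
    (hdx : d ≠ x) (hdy : d ≠ y) (hdc : d ≠ c)
    (hxy : hammingDist (Fin.tail x) (Fin.tail y) = 3)
    (hxc : hammingDist (Fin.tail x) (Fin.tail c) = 3)
    (hyc : hammingDist (Fin.tail y) (Fin.tail c) = 3) :
    ¬Disjoint (spareOutputs F2 C d) (spareOutputs F2 C x) :=
  not_disjoint_spareOutputs_of_ne_three hF hd hx hdx <|
    hammingDist_tail_ne_three_of_triangle hA hF hy hc hd hdy hdc hxy hxc hyc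

theorem card_filter_F1_lt_three (hA : Fintype.card A = 3)
    (hF : (C : Set (Fin 4 → A)).PairwiseDisjoint (fan 2 F1 F2)) (hC : #C = 6) (v : A) :
    #{c ∈ C | F1 (c 0) = v} < 3 := by
  by_contra! h
  obtain ⟨a, ha, b, hb, c, hc, hab, hac, hbc⟩ := two_lt_card.1 h
  simp only [mem_filter] at ha hb hc
  have hF1 {x y} (hx : x ∈ C ∧ F1 (x 0) = v) (hy : y ∈ C ∧ F1 (y 0) = v) :
      F1 (x 0) = F1 (y 0) := hx.2.trans hy.2.symm
  have hab3 := hammingDist_tail_eq_three_of_F1_eq hF ha.1 hb.1 hab (hF1 ha hb)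
  have hac3 := hammingDist_tail_eq_three_of_F1_eq hF ha.1 hc.1 hac (hF1 ha hc)
  have hbc3 := hammingDist_tail_eq_three_of_F1_eq hF hb.1 hc.1 hbc (hF1 hb hc)
  have hrest : ∀ w ∈ C \ {a, b, c}, w ∈ C ∧ w ≠ a ∧ w ≠ b ∧ w ≠ c := by simp
  have hcol : ∀ w ∈ C \ {a, b, c}, F1 (w 0) ∈ univ.erase v := by
    intro w hw
    obtain ⟨hw, hwa, hwb, hwc⟩ := hrest w hw
    refine mem_erase.2 ⟨fun hwv => ?_, mem_univ _⟩
    exact hammingDist_tail_ne_three_of_triangle hA hF hb.1 hc.1 hw hwb hwc hab3 hac3 hbc3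
      (hammingDist_tail_eq_three_of_F1_eq hF hw ha.1 hwa (hwv.trans ha.2.symm))
  have hcard : #(univ.erase v) < #(C \ {a, b, c}) := by
    rw [card_erase_of_mem (mem_univ v), card_univ, hA, card_sdiff_of_subset (by grind), hC,
      card_eq_three.2 ⟨a, b, c, hab, hac, hbc, rfl⟩]
    decide
  obtain ⟨d, hd, e, he, hde, hde'⟩ := exists_ne_map_eq_of_card_lt_of_maps_to hcard hcol
  obtain ⟨hd, hda, hdb, hdc⟩ := hrest d hd
  obtain ⟨he, hea, heb, hec⟩ := hrest e he
  have hd3 : 2 < #(spareOutputs F2 C d) := two_lt_card_of_not_disjoint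
    (not_disjoint_spareOutputs_of_triangle hA hF ha.1 hb.1 hc.1 hd hda hdb hdc hab3 hac3 hbc3)
    (not_disjoint_spareOutputs_of_triangle hA hF hb.1 ha.1 hc.1 hd hdb hda hdc
      ((hammingDist_comm _ _).trans hab3) hbc3 hac3)
    (not_disjoint_spareOutputs_of_triangle hA hF hc.1 ha.1 hb.1 hd hdc hda hdb
      ((hammingDist_comm _ _).trans hac3) ((hammingDist_comm _ _).trans hbc3) hab3)
    (disjoint_spareOutputs_of_F1_eq hF ha.1 hb.1 hab (hF1 ha hb))
    (disjoint_spareOutputs_of_F1_eq hF ha.1 hc.1 hac (hF1 ha hc))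
    (disjoint_spareOutputs_of_F1_eq hF hb.1 hc.1 hbc (hF1 hb hc))
  have he1 : 0 < #(spareOutputs F2 C e) := card_pos.2 <| Nonempty.mono inter_subset_left <|
    not_disjoint_iff_nonempty_inter.1 <|
      not_disjoint_spareOutputs_of_triangle hA hF ha.1 hb.1 hc.1 he hea heb hec hab3 hac3 hbc3
  have := card_spareOutputs_add_card_le hA hF hC hd he hde hde'
  omega

theorem card_filter_F1_eq_two (hA : Fintype.card A = 3)
    (hF : (C : Set (Fin 4 → A)).PairwiseDisjoint (fan 2 F1 F2)) (hC : #C = 6) (v : A) :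
    #{c ∈ C | F1 (c 0) = v} = 2 := by
  have hsum : ∑ w, #{c ∈ C | F1 (c 0) = w} = 6 :=
    hC ▸ (card_eq_sum_card_fiberwise fun c _ => mem_univ (F1 (c 0))).symm
  have hrest : ∑ w ∈ univ.erase v, #{c ∈ C | F1 (c 0) = w} ≤ #(univ.erase v) • 2 :=
    sum_le_card_nsmul _ _ _ fun w _ => Nat.le_of_lt_succ (card_filter_F1_lt_three hA hF hC w)
  rw [← add_sum_erase _ _ (mem_univ v)] at hsum
  rw [card_erase_of_mem (mem_univ v), card_univ, hA, smul_eq_mul] at hrest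
  have := card_filter_F1_lt_three hA hF hC v
  omega

theorem exists_card_spareOutputs_le_one (hA : Fintype.card A = 3)
    (hF : (C : Set (Fin 4 → A)).PairwiseDisjoint (fan 2 F1 F2)) (hC : #C = 6) (v : A) :
    ∃ x ∈ C, ∃ x' ∈ C, x ≠ x' ∧ F1 (x 0) = v ∧ F1 (x' 0) = v ∧
      #(spareOutputs F2 C x) ≤ 1 := by
  obtain ⟨x, x', hxx', hfiber⟩ := card_eq_two.1 (card_filter_F1_eq_two hA hF hC v)
  have hx : x ∈ {c ∈ C | F1 (c 0) = v} := by rw [hfiber]; simp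
  have hx' : x' ∈ {c ∈ C | F1 (c 0) = v} := by rw [hfiber]; simp
  rw [mem_filter] at hx hx'
  have := card_spareOutputs_add_card_le hA hF hC hx.1 hx'.1 hxx' (hx.2.trans hx'.2.symm)
  by_cases hlight : #(spareOutputs F2 C x) ≤ 1
  · exact ⟨x, hx.1, x', hx'.1, hxx', hx.2, hx'.2, hlight⟩
  · exact ⟨x', hx'.1, x, hx.1, hxx'.symm, hx'.2, hx.2, by omega⟩

theorem hammingDist_tail_eq_three_or_of_card_spareOutputs_le_one
    (hF : (C : Set (Fin 4 → A)).PairwiseDisjoint (fan 2 F1 F2))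
    (hx : x ∈ C) (hy : y ∈ C) (hy' : y' ∈ C) (hyy' : y ≠ y') (hcol : F1 (y 0) = F1 (y' 0))
    (hxy : F1 (x 0) ≠ F1 (y 0)) (hlight : #(spareOutputs F2 C x) ≤ 1) :
    hammingDist (Fin.tail x) (Fin.tail y) = 3 ∨ hammingDist (Fin.tail x) (Fin.tail y') = 3 := by
  by_contra! h
  have := one_lt_card_of_not_disjoint
    (not_disjoint_spareOutputs_of_ne_three hF hx hy (by rintro rfl; exact hxy rfl) h.1)
    (not_disjoint_spareOutputs_of_ne_three hF hx hy' (by rintro rfl; exact hxy hcol.symm) h.2)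
    (disjoint_spareOutputs_of_F1_eq hF hy hy' hyy' hcol)
  omega

theorem hammingDist_tail_eq_three_of_card_spareOutputs_le_one (hA : Fintype.card A = 3)
    (hF : (C : Set (Fin 4 → A)).PairwiseDisjoint (fan 2 F1 F2))
    (hx : x ∈ C) (hx' : x' ∈ C) (hy : y ∈ C) (hy' : y' ∈ C) (hxx' : x ≠ x') (hyy' : y ≠ y')
    (hcolx : F1 (x 0) = F1 (x' 0)) (hcoly : F1 (y 0) = F1 (y' 0)) (hxy : F1 (x 0) ≠ F1 (y 0))
    (hlx : #(spareOutputs F2 C x) ≤ 1) (hly : #(spareOutputs F2 C y) ≤ 1) :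
    hammingDist (Fin.tail x) (Fin.tail y) = 3 := by
  obtain hxy3 | hxy'3 :=
    hammingDist_tail_eq_three_or_of_card_spareOutputs_le_one hF hx hy hy' hyy' hcoly hxy hlx
  · exact hxy3
  obtain hyx3 | hyx'3 :=
    hammingDist_tail_eq_three_or_of_card_spareOutputs_le_one hF hy hx hx' hxx' hcolx
      (Ne.symm hxy) hly
  · rwa [hammingDist_comm]
  refine absurd hyx'3 (hammingDist_tail_ne_three_of_square hA hF hx hy' hx' hy ?_ ?_ hxy'3
    (hammingDist_tail_eq_three_of_F1_eq hF hx hx' hxx' hcolx)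
    (hammingDist_tail_eq_three_of_F1_eq hF hy hy' hyy' hcoly))
  · rintro rfl; exact hxy (hcolx.trans hcoly.symm)
  · rintro rfl; exact hxy rfl

end TernaryNetwork

theorem not_oneErrCorr_of_card_eq_six {A : Type*} [Fintype A] [DecidableEq A]
    (hA : Fintype.card A = 3) (C : Finset (Fin 4 → A)) (hC : #C = 6) : ¬OneErrCorr 2 C := by
  rintro ⟨F1, F2, hF⟩
  replace hF : (C : Set (Fin 4 → A)).PairwiseDisjoint (fan 2 F1 F2) :=
    fun c hc c' hc' => hF c hc c' hc'
  obtain ⟨u, v, w, huv, huw, hvw, -⟩ := card_eq_three.1 (card_univ.trans hA)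
  obtain ⟨x, hx, x', hx', hxx', hxu, hx'u, hlx⟩ := exists_card_spareOutputs_le_one hA hF hC u
  obtain ⟨y, hy, y', hy', hyy', hyv, hy'v, hly⟩ := exists_card_spareOutputs_le_one hA hF hC v
  obtain ⟨z, hz, z', hz', hzz', hzw, hz'w, hlz⟩ := exists_card_spareOutputs_le_one hA hF hC w
  have hxy := hammingDist_tail_eq_three_of_card_spareOutputs_le_one hA hF hx hx' hy hy' hxx'
    hyy' (hxu.trans hx'u.symm) (hyv.trans hy'v.symm) (hxu ▸ hyv ▸ huv) hlx hly
  have hxz := hammingDist_tail_eq_three_of_card_spareOutputs_le_one hA hF hx hx' hz hz' hxx'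
    hzz' (hxu.trans hx'u.symm) (hzw.trans hz'w.symm) (hxu ▸ hzw ▸ huw) hlx hlz
  have hyz := hammingDist_tail_eq_three_of_card_spareOutputs_le_one hA hF hy hy' hz hz' hyy'
    hzz' (hyv.trans hy'v.symm) (hzw.trans hz'w.symm) (hyv ▸ hzw ▸ hvw) hly hlz
  refine hammingDist_tail_ne_three_of_triangle hA hF hy hz hx' ?_ ?_ hxy hxz hyz
    (hammingDist_tail_eq_three_of_F1_eq hF hx' hx hxx'.symm (hx'u.trans hxu.symm))
  · rintro rfl; exact huv (hx'u.symm.trans hyv)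
  · rintro rfl; exact huw (hx'u.symm.trans hzw)

def exampleF2 (y : Fin 3 → Fin 3) : Fin 2 → Fin 3 :=
  ![![![![1, 1], ![0, 1], ![1, 0]], ![![1, 0], ![0, 0], ![1, 2]], ![![0, 1], ![2, 0], ![0, 0]]],
    ![![![0, 1], ![0, 0], ![0, 0]], ![![0, 2], ![2, 1], ![0, 0]], ![![2, 2], ![0, 2], ![0, 1]]],
    ![![![0, 1], ![0, 0], ![0, 0]], ![![0, 0], ![0, 0], ![0, 0]], ![![0, 1], ![0, 0], ![0, 0]]]]
    (y 0) (y 1) (y 2)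

theorem sigma_N2_3_eq_five :
    OneErrCorr 2 exampleCode13 ∧ exampleCode13.card = 5 ∧
      ∀ (A : Type) [Fintype A] [DecidableEq A], Fintype.card A = 3 →
        ∀ C' : Finset (Fin 4 → A), C'.card = 6 → ¬ OneErrCorr 2 C' :=
  ⟨⟨id, exampleF2, by decide⟩, by decide,
    fun _ _ _ hA C' hC => not_oneErrCorr_of_card_eq_six hA C' hC⟩
end

section
/- Over a 4-element alphabet A, there exists a code C ⊆ A^5 of size 31 that is 1-error correctable for the network N_3; hence σ(N_3, 4) ≥ 31. -/
open Finset

/-! ### Auxiliary lemmas and the explicit construction over `Fin 4` -/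

lemma hammingBall_eq {A : Type*} [Fintype A] [DecidableEq A] {n : ℕ} (c : Fin n → A) :
    (Finset.univ.filter fun x : Fin n → A => hammingDist x c ≤ 1) =
      insert c ((Finset.univ ×ˢ Finset.univ).image
        fun p : Fin n × A => Function.update c p.1 p.2) := by
  ext x
  simp only [mem_filter, mem_univ, true_and, mem_insert, mem_image, mem_product]
  constructor
  · intro h
    by_cases hx : x = c
    · exact Or.inl hx
    · right
      have : ∃ i, x i ≠ c i := by
        by_contra hc
        push_neg at hc
        exact hx (funext hc)
      obtain ⟨i, hi⟩ := this
      refine ⟨(i, x i), ?_⟩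
      funext j
      by_cases hj : j = i
      · subst hj; simp [Function.update]
      · simp only [Function.update, dif_neg hj]
        by_contra hne
        replace hne : x j ≠ c j := fun h => hne h.symm
        have h2 : ({i, j} : Finset (Fin n)) ⊆ Finset.univ.filter fun k => x k ≠ c k := by
          intro k hk
          simp only [mem_insert, mem_singleton] at hk
          rcases hk with rfl | rfl <;> simp_all [Ne.symm]
        have hle := Finset.card_le_card h2
        rw [Finset.card_insert_of_notMem (by simp [Ne.symm hj]), Finset.card_singleton] at hle
        have : 2 ≤ hammingDist x c := hle
        omega
  · rintro (rfl | ⟨⟨i, a⟩, rfl⟩)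
    · simp
    · calc hammingDist (Function.update c i a) c
          ≤ ({i} : Finset (Fin n)).card := by
            apply Finset.card_le_card
            intro k hk
            simp only [mem_filter, mem_univ, true_and] at hk
            simp only [mem_singleton]
            by_contra hki
            exact hk (by simp [Function.update, hki])
        _ = 1 := rfl

lemma fan_eq {A : Type*} [Fintype A] [DecidableEq A] (s : ℕ)
    (F1 : A → A) (F2 : (Fin (s + 1) → A) → Fin s → A) (c : Fin (s + 2) → A) :
    fan s F1 F2 c = (insert c ((Finset.univ ×ˢ Finset.univ).image
        fun p : Fin (s+2) × A => Function.update c p.1 p.2)).image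
      fun x => (F1 (x 0), F2 fun i => x i.succ) := by
  rw [fan, hammingBall_eq]
def tbl : List ℕ := [0,60,0,37,61,0,43,28,39,0,0,59,28,32,59,28,53,24,24,42,16,53,45,16,47,24,58,0,16,33,0,62,20,33,0,52,47,8,51,0,20,63,39,20,63,8,8,32,12,42,58,12,45,4,4,58,59,0,43,12,0,53,4,37,54,25,25,40,17,54,41,17,44,25,58,0,17,36,0,62,0,60,1,46,61,0,35,29,38,1,1,56,29,34,56,29,13,40,54,13,41,5,5,54,59,0,35,13,0,53,5,46,21,36,0,52,44,9,51,0,21,50,38,21,50,9,9,34,22,36,0,51,44,10,50,0,22,63,39,22,63,10,10,32,14,42,55,14,45,6,6,55,57,0,35,14,0,49,6,46,0,60,2,46,48,0,35,30,39,2,2,49,30,32,49,30,61,26,26,42,18,61,45,18,44,26,57,0,18,36,0,55,15,40,48,15,41,7,7,48,57,0,43,15,0,49,7,37,23,33,0,51,47,11,50,0,23,52,38,23,52,11,11,34,56,27,27,40,19,56,41,19,47,27,57,0,19,33,0,55,0,60,3,37,48,0,43,31,38,3,3,62,31,34,62,31]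

def cw : Fin 31 → (Fin 5 → Fin 4) := ![![2,0,0,2,2],![3,1,1,2,2],![0,2,2,2,2],![1,3,3,2,2],![0,0,3,1,2],![1,1,2,1,2],![2,2,1,1,2],![3,3,0,1,2],![0,0,2,3,1],![1,1,3,3,1],![2,2,0,3,1],![3,3,1,3,1],![1,0,3,0,3],![0,1,2,0,3],![3,2,1,0,3],![2,3,0,0,3],![3,0,1,1,0],![2,1,0,1,0],![1,2,3,1,0],![0,3,2,1,0],![1,0,2,2,0],![0,1,3,2,0],![3,2,0,2,0],![2,3,1,2,0],![2,0,1,0,1],![3,1,0,0,1],![0,2,3,0,1],![1,3,2,0,1],![3,0,0,3,3],![2,1,1,3,3],![1,2,2,3,3]]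

def fx : Fin 31 → Finset (Fin 4 × (Fin 3 → Fin 4)) := ![{((0 : Fin 4), ![0,0,0]), ((1 : Fin 4), ![0,0,0]), ((2 : Fin 4), ![0,0,0]), ((2 : Fin 4), ![2,1,3]), ((2 : Fin 4), ![2,2,3]), ((2 : Fin 4), ![3,2,2]), ((2 : Fin 4), ![3,2,3]), ((3 : Fin 4), ![0,0,0])},{((0 : Fin 4), ![0,0,1]), ((1 : Fin 4), ![0,0,1]), ((2 : Fin 4), ![0,0,1]), ((3 : Fin 4), ![0,0,1]), ((3 : Fin 4), ![2,0,3]), ((3 : Fin 4), ![2,1,2]), ((3 : Fin 4), ![3,2,0]), ((3 : Fin 4), ![3,2,2])},{((0 : Fin 4), ![0,0,2]), ((0 : Fin 4), ![2,0,3]), ((0 : Fin 4), ![2,1,3]), ((0 : Fin 4), ![3,0,1]), ((0 : Fin 4), ![3,2,1]), ((1 : Fin 4), ![0,0,2]), ((2 : Fin 4), ![0,0,2]), ((3 : Fin 4), ![0,0,2])},{((0 : Fin 4), ![0,0,3]), ((1 : Fin 4), ![0,0,3]), ((1 : Fin 4), ![2,1,2]), ((1 : Fin 4), ![2,2,3]),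 ((1 : Fin 4), ![3,2,1]), ((1 : Fin 4), ![3,3,2]), ((2 : Fin 4), ![0,0,3]), ((3 : Fin 4), ![0,0,3])},{((0 : Fin 4), ![0,1,0]), ((0 : Fin 4), ![2,2,3]), ((0 : Fin 4), ![2,3,1]), ((0 : Fin 4), ![3,0,3]), ((0 : Fin 4), ![3,2,2]), ((1 : Fin 4), ![0,1,0]), ((2 : Fin 4), ![0,1,0]), ((3 : Fin 4), ![0,1,0])},{((0 : Fin 4), ![0,1,1]), ((1 : Fin 4), ![0,1,1]), ((1 : Fin 4), ![2,0,3]), ((1 : Fin 4), ![2,2,1]), ((1 : Fin 4), ![3,0,3]), ((1 : Fin 4), ![3,1,2]), ((2 : Fin 4), ![0,1,1]), ((3 : Fin 4), ![0,1,1])},{((0 : Fin 4), ![0,1,2]), ((1 : Fin 4), ![0,1,2]), ((2 : Fin 4), ![0,1,2]), ((2 : Fin 4), ![2,0,3]), ((2 : Fin 4), ![2,3,1]), ((2 : Fin 4), ![3,0,2]), ((2 : Fin 4), ![3,1,3]), ((3 : Fin 4), ![0,1,2])},{((0 : Fin 4), ![0,1,3]), ((1 : Fin 4), ![0,1,3]),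 ((2 : Fin 4), ![0,1,3]), ((3 : Fin 4), ![0,1,3]), ((3 : Fin 4), ![2,2,1]), ((3 : Fin 4), ![2,2,3]), ((3 : Fin 4), ![3,0,0]), ((3 : Fin 4), ![3,0,2])},{((0 : Fin 4), ![0,2,0]), ((0 : Fin 4), ![2,0,0]), ((0 : Fin 4), ![2,0,1]), ((0 : Fin 4), ![3,1,1]), ((0 : Fin 4), ![3,3,3]), ((1 : Fin 4), ![0,2,0]), ((2 : Fin 4), ![0,2,0]), ((3 : Fin 4), ![0,2,0])},{((0 : Fin 4), ![0,2,1]), ((1 : Fin 4), ![0,2,1]), ((1 : Fin 4), ![2,0,2]), ((1 : Fin 4), ![2,1,0]), ((1 : Fin 4), ![3,0,2]), ((1 : Fin 4), ![3,1,1]), ((2 : Fin 4), ![0,2,1]), ((3 : Fin 4), ![0,2,1])},{((0 : Fin 4), ![0,2,2]), ((1 : Fin 4), ![0,2,2]), ((2 : Fin 4), ![0,2,2]), ((2 : Fin 4), ![2,0,0]), ((2 : Fin 4), ![2,1,0]), ((2 : Fin 4), ![3,0,1]), ((2 : Fin 4), ![3,3,3]), ((3 : Fin 4), ![0,2,2])},{((0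 : Fin 4), ![0,2,3]), ((1 : Fin 4), ![0,2,3]), ((2 : Fin 4), ![0,2,3]), ((3 : Fin 4), ![0,2,3]), ((3 : Fin 4), ![2,0,1]), ((3 : Fin 4), ![2,0,2]), ((3 : Fin 4), ![3,0,1]), ((3 : Fin 4), ![3,1,0])},{((0 : Fin 4), ![0,3,0]), ((1 : Fin 4), ![0,3,0]), ((1 : Fin 4), ![2,1,1]), ((1 : Fin 4), ![2,2,2]), ((1 : Fin 4), ![3,1,0]), ((1 : Fin 4), ![3,2,2]), ((2 : Fin 4), ![0,3,0]), ((3 : Fin 4), ![0,3,0])},{((0 : Fin 4), ![0,3,1]), ((0 : Fin 4), ![2,2,0]), ((0 : Fin 4), ![2,3,2]), ((0 : Fin 4), ![3,1,0]), ((0 : Fin 4), ![3,1,2]), ((1 : Fin 4), ![0,3,1]), ((2 : Fin 4), ![0,3,1]), ((3 : Fin 4), ![0,3,1])},{((0 : Fin 4), ![0,3,2]), ((1 : Fin 4), ![0,3,2]), ((2 : Fin 4), ![0,3,2]), ((3 : Fin 4), ![0,3,2]), ((3 : Fin 4), ![2,2,2]), ((3 : Fin 4), ![2,3,2]), ((3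 : Fin 4), ![3,0,3]), ((3 : Fin 4), ![3,1,3])},{((0 : Fin 4), ![0,3,3]), ((1 : Fin 4), ![0,3,3]), ((2 : Fin 4), ![0,3,3]), ((2 : Fin 4), ![2,1,1]), ((2 : Fin 4), ![2,2,0]), ((2 : Fin 4), ![3,0,0]), ((2 : Fin 4), ![3,0,3]), ((3 : Fin 4), ![0,3,3])},{((0 : Fin 4), ![1,0,0]), ((1 : Fin 4), ![1,0,0]), ((2 : Fin 4), ![1,0,0]), ((3 : Fin 4), ![1,0,0]), ((3 : Fin 4), ![2,3,1]), ((3 : Fin 4), ![2,3,3]), ((3 : Fin 4), ![3,1,1]), ((3 : Fin 4), ![3,3,1])},{((0 : Fin 4), ![1,0,1]), ((1 : Fin 4), ![1,0,1]), ((2 : Fin 4), ![1,0,1]), ((2 : Fin 4), ![2,2,1]), ((2 : Fin 4), ![2,3,0]), ((2 : Fin 4), ![3,1,2]), ((2 : Fin 4), ![3,3,1]), ((3 : Fin 4), ![1,0,1])},{((0 : Fin 4), ![1,0,2]), ((1 : Fin 4), ![1,0,2]), ((1 : Fin 4), ![2,3,0]), ((1 : Fin 4), ![2,3,1]), ((1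 : Fin 4), ![3,0,0]), ((1 : Fin 4), ![3,3,1]), ((2 : Fin 4), ![1,0,2]), ((3 : Fin 4), ![1,0,2])},{((0 : Fin 4), ![1,0,3]), ((0 : Fin 4), ![2,2,1]), ((0 : Fin 4), ![2,3,3]), ((0 : Fin 4), ![3,0,0]), ((0 : Fin 4), ![3,2,0]), ((1 : Fin 4), ![1,0,3]), ((2 : Fin 4), ![1,0,3]), ((3 : Fin 4), ![1,0,3])},{((0 : Fin 4), ![1,1,0]), ((1 : Fin 4), ![1,1,0]), ((1 : Fin 4), ![2,1,3]), ((1 : Fin 4), ![2,3,3]), ((1 : Fin 4), ![3,2,3]), ((1 : Fin 4), ![3,3,3]), ((2 : Fin 4), ![1,1,0]), ((3 : Fin 4), ![1,1,0])},{((0 : Fin 4), ![1,1,1]), ((0 : Fin 4), ![2,1,2]), ((0 : Fin 4), ![2,3,0]), ((0 : Fin 4), ![3,0,2]), ((0 : Fin 4), ![3,2,3]), ((1 : Fin 4), ![1,1,1]), ((2 : Fin 4), ![1,1,1]), ((3 : Fin 4), ![1,1,1])},{((0 : Fin 4), ![1,1,2]), ((1 : Fin 4), ![1,1,2]), ((2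 : Fin 4), ![1,1,2]), ((3 : Fin 4), ![1,1,2]), ((3 : Fin 4), ![2,1,3]), ((3 : Fin 4), ![2,3,0]), ((3 : Fin 4), ![3,2,1]), ((3 : Fin 4), ![3,3,3])},{((0 : Fin 4), ![1,1,3]), ((1 : Fin 4), ![1,1,3]), ((2 : Fin 4), ![1,1,3]), ((2 : Fin 4), ![2,1,2]), ((2 : Fin 4), ![2,3,3]), ((2 : Fin 4), ![3,1,0]), ((2 : Fin 4), ![3,2,1]), ((3 : Fin 4), ![1,1,3])},{((0 : Fin 4), ![1,2,0]), ((1 : Fin 4), ![1,2,0]), ((2 : Fin 4), ![1,2,0]), ((2 : Fin 4), ![2,0,1]), ((2 : Fin 4), ![2,2,2]), ((2 : Fin 4), ![3,1,1]), ((2 : Fin 4), ![3,3,0]), ((3 : Fin 4), ![1,2,0])},{((0 : Fin 4), ![1,2,1]), ((1 : Fin 4), ![1,2,1]), ((2 : Fin 4), ![1,2,1]), ((3 : Fin 4), ![1,2,1]), ((3 : Fin 4), ![2,1,0]), ((3 : Fin 4), ![2,2,0]), ((3 : Fin 4), ![3,1,2]), ((3 : Fin 4), ![3,3,0])},{((0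 : Fin 4), ![1,2,2]), ((0 : Fin 4), ![2,1,0]), ((0 : Fin 4), ![2,2,2]), ((0 : Fin 4), ![3,3,0]), ((0 : Fin 4), ![3,3,1]), ((1 : Fin 4), ![1,2,2]), ((2 : Fin 4), ![1,2,2]), ((3 : Fin 4), ![1,2,2])},{((0 : Fin 4), ![1,2,3]), ((1 : Fin 4), ![1,2,3]), ((1 : Fin 4), ![2,0,1]), ((1 : Fin 4), ![2,2,0]), ((1 : Fin 4), ![3,2,0]), ((1 : Fin 4), ![3,3,0]), ((2 : Fin 4), ![1,2,3]), ((3 : Fin 4), ![1,2,3])},{((0 : Fin 4), ![1,3,0]), ((1 : Fin 4), ![1,3,0]), ((2 : Fin 4), ![1,3,0]), ((3 : Fin 4), ![1,3,0]), ((3 : Fin 4), ![2,0,0]), ((3 : Fin 4), ![2,1,1]), ((3 : Fin 4), ![3,2,3]), ((3 : Fin 4), ![3,3,2])},{((0 : Fin 4), ![1,3,1]), ((1 : Fin 4), ![1,3,1]), ((2 : Fin 4), ![1,3,1]), ((2 : Fin 4), ![2,0,2]), ((2 : Fin 4), ![2,3,2]), ((2 : Fin 4), ![3,2,0]), ((2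 : Fin 4), ![3,3,2]), ((3 : Fin 4), ![1,3,1])},{((0 : Fin 4), ![1,3,2]), ((1 : Fin 4), ![1,3,2]), ((1 : Fin 4), ![2,0,0]), ((1 : Fin 4), ![2,3,2]), ((1 : Fin 4), ![3,0,1]), ((1 : Fin 4), ![3,1,3]), ((2 : Fin 4), ![1,3,2]), ((3 : Fin 4), ![1,3,2])}]
def dec3 (n : ℕ) : Fin 3 → Fin 4 := ![⟨n / 16 % 4, Nat.mod_lt _ (by norm_num)⟩,
  ⟨n / 4 % 4, Nat.mod_lt _ (by norm_num)⟩, ⟨n % 4, Nat.mod_lt _ (by norm_num)⟩]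

def g (y : Fin 4 → Fin 4) : Fin 3 → Fin 4 :=
  dec3 (tbl.getD ((y 0).val * 64 + (y 1).val * 16 + (y 2).val * 4 + (y 3).val) 0)

def fanP (c : Fin 5 → Fin 4) : Finset (Fin 4 × (Fin 3 → Fin 4)) :=
  (insert c ((Finset.univ ×ˢ Finset.univ).image
        fun p : Fin 5 × Fin 4 => Function.update c p.1 p.2)).image
      fun x => (id (x 0), g fun i => x i.succ)

set_option maxRecDepth 100000 in
set_option maxHeartbeats 4000000 in
lemma hfan : ∀ i : Fin 31, fanP (cw i) = fx i := by decide

set_option maxRecDepth 100000 in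
set_option maxHeartbeats 4000000 in
lemma hdisj : ∀ i j : Fin 31, i ≠ j → Disjoint (fx i) (fx j) := by decide

set_option maxRecDepth 100000 in
lemma hcard : (Finset.univ.image cw).card = 31 := by decide

lemma fan_cw_eq (i : Fin 31) : fan 3 id g (cw i) = fx i := by
  rw [fan_eq]; exact hfan i

lemma oneErrCorr_fin4 : OneErrCorr 3 (Finset.univ.image cw) := by
  refine ⟨id, g, ?_⟩
  intro c hc c' hc' hne
  simp only [mem_image, mem_univ, true_and] at hc hc'
  obtain ⟨i, rfl⟩ := hc
  obtain ⟨j, rfl⟩ := hc'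
  rw [fan_cw_eq, fan_cw_eq]
  exact hdisj i j (fun h => hne (by rw [h]))

/-! ### Transfer along an equivalence of alphabets -/

lemma hammingDist_comp_equiv {A B : Type*} [Fintype B] [DecidableEq A] [DecidableEq B] {n : ℕ} (e : B ≃ A)
    (x y : Fin n → B) :
    hammingDist (fun i => e (x i)) (fun i => e (y i)) = hammingDist x y := by
  simp only [hammingDist]
  congr 1
  apply Finset.filter_congr
  intro i _
  simp [e.injective.ne_iff]

lemma fan_comp_equiv {A B : Type*} [Fintype A] [DecidableEq A] [Fintype B] [DecidableEq B]
    (e : B ≃ A) (F1 : B → B) (F2 : (Fin 4 → B) → Fin 3 → B) (c : Fin 5 → B) :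
    fan 3 (fun a => e (F1 (e.symm a))) (fun y i => e (F2 (fun j => e.symm (y j)) i))
        (fun i => e (c i))
      = (fan 3 F1 F2 c).image (fun p => (e p.1, fun i => e (p.2 i))) := by
  have hfilt : (Finset.univ.filter fun x : Fin 5 → A =>
        hammingDist x (fun i => e (c i)) ≤ 1)
      = (Finset.univ.filter fun x : Fin 5 → B => hammingDist x c ≤ 1).image
          (fun x i => e (x i)) := by
    ext x
    simp only [mem_filter, mem_univ, true_and, mem_image]
    constructor
    · intro h
      refine ⟨fun i => e.symm (x i), ?_, ?_⟩
      · have hx : (fun i => e (e.symm (x i))) = x := by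
          funext i; simp
        calc hammingDist (fun i => e.symm (x i)) c
            = hammingDist (fun i => e (e.symm (x i))) (fun i => e (c i)) :=
              (hammingDist_comp_equiv e _ _).symm
          _ = hammingDist x (fun i => e (c i)) := by rw [hx]
          _ ≤ 1 := h
      · funext i; simp
    · rintro ⟨y, hy, rfl⟩
      calc hammingDist (fun i => e (y i)) (fun i => e (c i)) = hammingDist y c :=
            hammingDist_comp_equiv e _ _
        _ ≤ 1 := hy
  unfold fan
  rw [hfilt, Finset.image_image, Finset.image_image]
  apply Finset.image_congr
  intro x _
  simp

theorem sigma_N3_4_ge_thirtyone :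
    ∀ (A : Type) [Fintype A] [DecidableEq A], Fintype.card A = 4 →
      ∃ C : Finset (Fin 5 → A), C.card = 31 ∧ OneErrCorr 3 C := by
  intro A _ _ hA
  have e : Fin 4 ≃ A := (Fintype.equivFinOfCardEq hA).symm
  have hinj : Function.Injective (fun (c : Fin 5 → Fin 4) (i : Fin 5) => e (c i)) := by
    intro c c' h
    funext i
    exact e.injective (congrFun h i)
  refine ⟨(Finset.univ.image cw).image (fun c i => e (c i)), ?_, ?_⟩
  · rw [Finset.card_image_of_injective _ hinj, hcard]
  · obtain ⟨F1, F2, hF⟩ := oneErrCorr_fin4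
    refine ⟨fun a => e (F1 (e.symm a)), fun y i => e (F2 (fun j => e.symm (y j)) i), ?_⟩
    intro c hc c' hc' hne
    simp only [mem_image] at hc hc'
    obtain ⟨b, hb, rfl⟩ := hc
    obtain ⟨b', hb', rfl⟩ := hc'
    replace hb : b ∈ Finset.univ.image cw := by
      obtain ⟨i, -, rfl⟩ := hb; exact Finset.mem_image_of_mem _ (Finset.mem_univ i)
    replace hb' : b' ∈ Finset.univ.image cw := by
      obtain ⟨i, -, rfl⟩ := hb'; exact Finset.mem_image_of_mem _ (Finset.mem_univ i)
    rw [fan_comp_equiv, fan_comp_equiv]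
    have hbne : b ≠ b' := fun h => hne (by rw [h])
    apply Finset.disjoint_image ?_ |>.mpr (hF b hb b' hb' hbne)
    intro p q h
    have h1 := congrArg Prod.fst h
    have h2 := congrArg Prod.snd h
    simp only at h1 h2
    ext1
    · exact e.injective h1
    · funext i
      exact e.injective (congrFun h2 i)
end
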